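/- Let a, D, μ > 0, t > 0 and N ∈ ℕ with N ≥ 1. For λ ≥ 0, set α(λ) := 4πλDa + μ, β(λ) := 4a²λ√(πD/α(λ)), and P(λ) := (1 − μ/α(λ))(1 − exp(−2β(λ)√(α(λ)t) − α(λ)t)) + (√π β(λ) μ/α(λ)) e^{β(λ)²} (erf(β(λ) + √(α(λ)t)) − erf(β(λ))). Define g(λ) := 1 − (1 − P(λ))^N. Then g(0) = 0 and g is differentiable at λ = 0 from the right with derivative g′(0) = 4πaN·[(D/μ)(1 − e^{−μt}) + a√(D/μ)·erf(√(μt))]; equivalently, g(λ) = 4πaNλ·[(D/μ)(1 − e^{−μt}) + a√(D/μ)·erf(√(μt))] + O(λ²) as λ → 0⁺. -/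

import Mathlib

/-- The error function `erf x = (2/√π) ∫₀ˣ e^{-u²} du`. -/
noncomputable def erf (x : ℝ) : ℝ :=
  (2 / Real.sqrt Real.pi) * ∫ u in (0:ℝ)..x, Real.exp (-u ^ 2)

/-- `α(λ) = 4πλDa + μ`. -/
noncomputable def alph (a D mu lam : ℝ) : ℝ := 4 * Real.pi * lam * D * a + mu

/-- `β(λ) = 4a²λ√(πD/α(λ))`. -/
noncomputable def bet (a D mu lam : ℝ) : ℝ :=
  4 * a ^ 2 * lam * Real.sqrt (Real.pi * D / alph a D mu lam)

/-- `P(λ)`: the probability that a single degradable molecule hits any receiver within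
time `t` before degrading, as a function of the receiver density `λ`. -/
noncomputable def hitProbDeg (a D mu t lam : ℝ) : ℝ :=
  (1 - mu / alph a D mu lam) *
      (1 - Real.exp (-(2 * bet a D mu lam * Real.sqrt (alph a D mu lam * t))
        - alph a D mu lam * t))
    + (Real.sqrt Real.pi * bet a D mu lam * mu / alph a D mu lam) *
        Real.exp (bet a D mu lam ^ 2) *
        (erf (bet a D mu lam + Real.sqrt (alph a D mu lam * t)) - erf (bet a D mu lam))

open Real Filter Topology

/-! Write `P(λ) = (1 - μ/α(λ)) G(λ) + β(λ) F(λ)`. Both `1 - μ/α` and `β` vanish at `λ = 0`, and a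
product `u G` with `u(0) = 0` has derivative `u'(0) G(0)` at `0` as soon as `G` is merely continuous
there. Hence `P(0) = 0` and `P'(0) = (4πDa/μ)(1 - e^{-μt}) + 4a²√(πD/μ) · √π erf(√(μt))`, and the
chain rule gives `g'(0) = N P'(0)`. -/

theorem HasDerivAt.mul_continuousAt_of_eq_zero {𝕜 : Type*} [NontriviallyNormedField 𝕜]
    {u G : 𝕜 → 𝕜} {u' x : 𝕜} (hu : HasDerivAt u u' x) (hG : ContinuousAt G x)
    (hux : u x = 0) : HasDerivAt (fun y => u y * G y) (u' * G x) x := by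
  rw [hasDerivAt_iff_tendsto_slope] at hu ⊢
  refine (hu.mul (hG.tendsto.mono_left nhdsWithin_le_nhds)).congr fun y => ?_
  simp only [slope_def_field, hux, zero_mul, sub_zero, div_mul_eq_mul_div]

theorem HasDerivAt.one_sub_one_sub_pow_of_eq_zero {𝕜 : Type*} [NontriviallyNormedField 𝕜]
    {f : 𝕜 → 𝕜} {f' x : 𝕜} (hf : HasDerivAt f f' x) (hfx : f x = 0) (N : ℕ) :
    HasDerivAt (fun y => 1 - (1 - f y) ^ N) (N * f') x := by
  simpa [hfx] using ((hasDerivAt_const x 1).sub hf).pow N |>.const_sub 1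

theorem continuous_erf : Continuous erf :=
  (intervalIntegral.continuous_primitive
    (fun _ _ => (by fun_prop : Continuous fun u : ℝ => exp (-u ^ 2)).intervalIntegrable _ _)
    0).const_mul _

theorem erf_zero : erf 0 = 0 := by simp [erf]

section

variable (a D : ℝ) {mu : ℝ} (t : ℝ)

theorem alph_zero : alph a D mu 0 = mu := by simp [alph]

theorem hasDerivAt_alph (lam : ℝ) : HasDerivAt (alph a D mu) (4 * π * D * a) lam := by
  unfold alph
  simpa [mul_comm, mul_left_comm, mul_assoc] using
    ((hasDerivAt_id lam).const_mul (4 * π * D * a)).add_const mu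

theorem bet_zero : bet a D mu 0 = 0 := by simp [bet]

theorem continuousAt_div_alph_zero (c : ℝ) (hmu : mu ≠ 0) :
    ContinuousAt (fun lam => c / alph a D mu lam) 0 :=
  continuousAt_const.div (hasDerivAt_alph a D 0).continuousAt (by rwa [alph_zero])

theorem hasDerivAt_bet_zero (hmu : mu ≠ 0) :
    HasDerivAt (bet a D mu) (4 * a ^ 2 * √(π * D / mu)) 0 := by
  unfold bet
  simpa [alph_zero] using
    ((hasDerivAt_id (0 : ℝ)).const_mul (4 * a ^ 2)).mul_continuousAt_of_eq_zero
      (continuousAt_div_alph_zero a D (π * D) hmu).sqrt (by simp)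

theorem hasDerivAt_one_sub_div_alph_zero (hmu : mu ≠ 0) :
    HasDerivAt (fun lam => 1 - mu / alph a D mu lam) (4 * π * D * a / mu) 0 := by
  have h := ((hasDerivAt_const (0 : ℝ) mu).div (hasDerivAt_alph a D 0) (by rwa [alph_zero]))
  refine (h.const_sub 1).congr_deriv ?_
  rw [alph_zero]
  field_simp
  ring

theorem hitProbDeg_zero (hmu : mu ≠ 0) : hitProbDeg a D mu t 0 = 0 := by
  simp [hitProbDeg, alph_zero, bet_zero, div_self hmu]

theorem hasDerivAt_hitProbDeg_zero (hmu : mu ≠ 0) :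
    HasDerivAt (hitProbDeg a D mu t)
      (4 * π * a * (D / mu * (1 - exp (-mu * t)) + a * √(D / mu) * erf √(mu * t))) 0 := by
  have halph := (hasDerivAt_alph a D (mu := mu) 0).continuousAt
  have hbet := (hasDerivAt_bet_zero a D hmu).continuousAt
  have hsqrt : ContinuousAt (fun lam => √(alph a D mu lam * t)) 0 :=
    (halph.mul continuousAt_const).sqrt
  have hG : ContinuousAt (fun lam => 1 - exp (-(2 * bet a D mu lam * √(alph a D mu lam * t))
      - alph a D mu lam * t)) 0 := by
    fun_prop
  have hF : ContinuousAt (fun lam => (√π * mu / alph a D mu lam) * exp (bet a D mu lam ^ 2) *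
      (erf (bet a D mu lam + √(alph a D mu lam * t)) - erf (bet a D mu lam))) 0 :=
    ((continuousAt_div_alph_zero a D _ hmu).mul (by fun_prop)).mul
      ((continuous_erf.continuousAt.comp (hbet.add hsqrt)).sub
        (continuous_erf.continuousAt.comp hbet))
  have h := ((hasDerivAt_one_sub_div_alph_zero a D hmu).mul_continuousAt_of_eq_zero hG
    (by simp [alph_zero, div_self hmu])).add
    ((hasDerivAt_bet_zero a D hmu).mul_continuousAt_of_eq_zero hF (bet_zero a D))
  refine (h.congr_deriv ?_).congr_of_eventuallyEq (.of_forall fun lam => ?_)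
  · simp only [alph_zero, bet_zero, erf_zero, mul_zero, zero_mul, neg_zero, zero_sub, zero_add,
      sub_zero, zero_pow two_ne_zero, exp_zero, mul_one, neg_mul]
    rw [mul_div_assoc π, sqrt_mul pi_pos.le]
    field_simp
    rw [sq_sqrt pi_pos.le]
    ring
  · simp only [hitProbDeg, Pi.add_apply]
    ring

end

theorem event_detection_low_density_general (a D mu t : ℝ) (hmu : 0 < mu) (N : ℕ) :
    (1 - (1 - hitProbDeg a D mu t 0) ^ N = 0) ∧
    HasDerivWithinAt (fun lam : ℝ => 1 - (1 - hitProbDeg a D mu t lam) ^ N)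
      (4 * Real.pi * a * (N : ℝ) *
        (D / mu * (1 - Real.exp (-mu * t))
          + a * Real.sqrt (D / mu) * erf (Real.sqrt (mu * t))))
      (Set.Ici 0) 0 := by
  have hP0 := hitProbDeg_zero a D t hmu.ne'
  refine ⟨by simp [hP0], ?_⟩
  have hg := (hasDerivAt_hitProbDeg_zero a D t hmu.ne').one_sub_one_sub_pow_of_eq_zero hP0 N
  exact (hg.congr_deriv (by ring)).hasDerivWithinAt

/-- Remark 5: the event detection probability `g(λ) = 1 − (1 − P(λ))^N` vanishes at
`λ = 0` and has right derivative
`g′(0) = 4πaN[(D/μ)(1 − e^{−μt}) + a√(D/μ)·erf(√(μt))]` at `λ = 0`. -/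
theorem event_detection_low_density (a D mu t : ℝ) (ha : 0 < a) (hD : 0 < D)
    (hmu : 0 < mu) (ht : 0 < t) (N : ℕ) (hN : 1 ≤ N) :
    (1 - (1 - hitProbDeg a D mu t 0) ^ N = 0) ∧
    HasDerivWithinAt (fun lam : ℝ => 1 - (1 - hitProbDeg a D mu t lam) ^ N)
      (4 * Real.pi * a * (N : ℝ) *
        (D / mu * (1 - Real.exp (-mu * t))
          + a * Real.sqrt (D / mu) * erf (Real.sqrt (mu * t))))
      (Set.Ici 0) 0 :=
  event_detection_low_density_general a D mu t hmu N
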